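/- arXiv:1409.3868 — 2 statements merged into one kernel-verified Lean document; each statement's English description precedes it below -/
import Mathlib

section
/- If r_1,…,r_n are generators of 𝕊, then ∑_{j=1}^n h(r_j) = Nn + n(n−1)/2. -/
/-!
The map `r ↦ ∑ⱼ Xʲ rⱼ(Xⁿ)` identifies vector polynomials with scalar ones, turns the height
into the degree, and turns multiplication of `r` by a scalar polynomial `c` into multiplication
by `c(Xⁿ)`. Hence heights behave like degrees: vectors of equal height cancel against each other
up to a constant, and `∑ⱼ cⱼ rⱼ` has height `maxⱼ (n deg cⱼ + h(rⱼ))` as soon as the heights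
`h(rⱼ)` are pairwise incongruent modulo `n`. Minimality of the generators forces exactly this, so
the residues `h(rⱼ) mod n` run through `0, …, n - 1`, and the generators span `𝕊` over `ℂ[X]`.

Now count dimensions inside the space of vectors whose coordinates have degree `< M`. Its
intersection with `𝕊` has the basis `Xᵈ rⱼ` (`n d + h(rⱼ) < n M`), hence dimension
`∑ⱼ (M - ⌊h(rⱼ)/n⌋)`. It is also the kernel of evaluation at the interpolation data, which is onto
`ℂᴺ` because the `α(k)` at each node are independent; so its dimension is `n M - N`. Therefore
`∑ⱼ ⌊h(rⱼ)/n⌋ = N`, while the residues add up to `n (n - 1) / 2`.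
-/

open Polynomial Matrix

/-- The height of an `n`-dimensional vector polynomial. -/
noncomputable def vheight (n : ℕ) (r : Fin n → Polynomial ℂ) : WithBot ℕ :=
  Finset.univ.sup fun j : Fin n => n • (r j).degree + ((j : ℕ) : WithBot ℕ)

/-- The class `𝓜(n,N)` of band symmetric matrices with degeneration indices `m`. -/
structure MatrixClassM (n N : ℕ) (A : Matrix (Fin N) (Fin N) ℝ) (m : ℕ → ℕ) : Prop where
  symm : A.IsSymm
  band : ∀ k l : Fin N, (n : ℤ) < |(k : ℤ) - (l : ℤ)| → A k l = 0
  m_zero : m 0 = 0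
  m_last : m n = N
  m_mono : ∀ j < n, m j < m (j + 1)
  m_one : 1 < m 1
  m_le : ∀ j, 1 ≤ j → j ≤ n → m j ≤ N - n + j
  d_pos : ∀ j < n, ∀ k l : Fin N, (l : ℕ) = (k : ℕ) + (n - j) →
      m j < (k : ℕ) + 1 → (k : ℕ) + 1 < m (j + 1) → 0 < A l k
  d_zero : ∀ j < n, ∀ k l : Fin N, (l : ℕ) = (k : ℕ) + (n - j) →
      m (j + 1) ≤ (k : ℕ) + 1 → (k : ℕ) + 1 ≤ N - n + j → A l k = 0

/-- The rank-one jump matrix `σ_k`. -/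
def sigmaJump {n N : ℕ} (αc : Fin N → Fin n → ℂ) (k : Fin N) :
    Matrix (Fin n) (Fin n) ℂ :=
  Matrix.of fun i j => (starRingEnd ℂ) (αc k i) * αc k j

/-- The inner product `⟨r,s⟩_{L²(σ)}` for vector polynomials. -/
noncomputable def L2inner {n N : ℕ} (x : Fin N → ℝ)
    (σ : Fin N → Matrix (Fin n) (Fin n) ℂ) (r s : Fin n → Polynomial ℂ) : ℂ :=
  ∑ k, ∑ i, ∑ j,
    (starRingEnd ℂ) ((r i).eval ((x k : ℂ))) * σ k i j * (s j).eval ((x k : ℂ))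

/-- The interpolation set `𝕊`. -/
def interpSet {n N : ℕ} (z : Fin N → ℂ) (α : Fin N → Fin n → ℂ) :
    Set (Fin n → Polynomial ℂ) :=
  {r | ∀ k, ∑ j, α k j * (r j).eval (z k) = 0}

/-- `𝕄(r_1) + ⋯ + 𝕄(r_m)`. -/
def polySpan {n m : ℕ} (r : Fin m → Fin n → Polynomial ℂ) :
    Set (Fin n → Polynomial ℂ) :=
  {s | ∃ c : Fin m → Polynomial ℂ, s = fun jj => ∑ i, c i * r i jj}

/-- `𝕄(r_1) + ⋯ + 𝕄(r_{j-1})`. -/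
def prevSpan {n : ℕ} (r : Fin n → Fin n → Polynomial ℂ) (j : Fin n) :
    Set (Fin n → Polynomial ℂ) :=
  {s | ∃ c : Fin n → Polynomial ℂ,
      s = fun jj => ∑ i ∈ Finset.univ.filter (fun i => i < j), c i * r i jj}

/-- `r` is a sequence of generators of `S`. -/
def IsGenSeq {n : ℕ} (S : Set (Fin n → Polynomial ℂ))
    (r : Fin n → Fin n → Polynomial ℂ) : Prop :=
  ∀ j : Fin n, r j ≠ 0 ∧ r j ∈ S \ prevSpan r j ∧
    ∀ s ∈ S \ prevSpan r j, s ≠ 0 → vheight n (r j) ≤ vheight n s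

open Function

theorem Polynomial.linearIndependent_of_natDegree_injective {K ι : Type*} [Field K]
    {f : ι → K[X]} (hf : ∀ i, f i ≠ 0) (hinj : Injective fun i => (f i).natDegree) :
    LinearIndependent K f := by
  classical
  rw [linearIndependent_iff']
  intro s g hsum i hi
  by_contra hgi
  have hdisj : Set.Pairwise {j | j ∈ s ∧ g j • f j ≠ 0} (Ne on fun j => (g j • f j).degree) := by
    rintro j ⟨-, hj⟩ k ⟨-, hk⟩ hjk hdeg
    rw [smul_ne_zero_iff] at hj hk
    simp only [smul_eq_C_mul, degree_C_mul hj.1, degree_C_mul hk.1] at hdeg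
    exact hjk (hinj (natDegree_eq_of_degree_eq hdeg))
  have hbot := degree_sum_eq_of_disjoint _ s hdisj
  rw [hsum, degree_zero, eq_comm, Finset.sup_eq_bot_iff] at hbot
  exact smul_ne_zero hgi (hf i) (degree_eq_bot.mp (hbot i hi))

theorem Nat.mul_add_lt_mul_iff {n d j M : ℕ} (hj : j < n) : n * d + j < n * M ↔ d < M := by
  constructor
  · intro h
    exact Nat.lt_of_mul_lt_mul_left (by omega : n * d < n * M)
  · intro h
    have := Nat.mul_le_mul_left n (Nat.succ_le_of_lt h)
    rw [Nat.mul_succ] at this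
    omega

theorem Nat.mul_add_lt_mul_iff_add_div_lt {n : ℕ} (hn : 0 < n) {d h M : ℕ} :
    n * d + h < n * M ↔ d + h / n < M := by
  conv_lhs => rw [← Nat.div_add_mod h n, ← add_assoc, ← mul_add]
  exact Nat.mul_add_lt_mul_iff (Nat.mod_lt _ hn)

theorem Fin.bijective_mod_of_injective {n : ℕ} {f : Fin n → ℕ}
    (hf : Injective fun j => f j % n) :
    Bijective fun j : Fin n => (⟨f j % n, Nat.mod_lt _ j.pos⟩ : Fin n) :=
  Finite.injective_iff_bijective.mp fun _ _ h => hf (congrArg Fin.val h)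

theorem Fin.sum_mod_of_injective {n : ℕ} {f : Fin n → ℕ} (hf : Injective fun j => f j % n) :
    ∑ j, f j % n = n * (n - 1) / 2 := by
  rw [← Finset.sum_range_id, ← Fin.sum_univ_eq_sum_range]
  exact Fintype.sum_bijective _ (Fin.bijective_mod_of_injective hf) _ _ fun j => rfl

theorem Polynomial.smul_mem_span_X_pow_smul {R M : Type*} [CommSemiring R] [AddCommMonoid M]
    [Module R[X] M] [Module R M] [IsScalarTower R R[X] M] {m : ℕ} {c : R[X]}
    (hc : c ∈ degreeLT R m) (v : M) :
    c • v ∈ Submodule.span R (Set.range fun d : Fin m => (X ^ (d : ℕ) : R[X]) • v) := by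
  classical
  rw [degreeLT_eq_span_X_pow] at hc
  induction hc using Submodule.span_induction with
  | mem p hp =>
    obtain ⟨d, hd, rfl⟩ := by simpa using hp
    exact Submodule.subset_span ⟨⟨d, hd⟩, rfl⟩
  | zero => simp
  | add p q _ _ hp hq => rw [add_smul]; exact add_mem hp hq
  | smul a p _ hp => rw [smul_assoc]; exact Submodule.smul_mem _ a hp

namespace VectorPolynomial

variable {n : ℕ}

theorem pos_of_ne_zero {r : Fin n → ℂ[X]} (hr : r ≠ 0) : 0 < n :=
  (Function.ne_iff.mp hr).choose.pos

noncomputable def interleave (n : ℕ) : (Fin n → ℂ[X]) →ₗ[ℂ] ℂ[X] where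
  toFun r := ∑ j : Fin n, X ^ (j : ℕ) * expand ℂ n (r j)
  map_add' r s := by simp only [Pi.add_apply, map_add, mul_add, Finset.sum_add_distrib]
  map_smul' a r := by simp only [Pi.smul_apply, map_smul, mul_smul_comm, Finset.smul_sum,
    RingHom.id_apply]

theorem interleave_apply (r : Fin n → ℂ[X]) :
    interleave n r = ∑ j : Fin n, X ^ (j : ℕ) * expand ℂ n (r j) := rfl

theorem degree_X_pow_mul_expand {j : ℕ} (hj : j < n) (p : ℂ[X]) :
    (X ^ j * expand ℂ n p).degree = n • p.degree + j := by
  rcases eq_or_ne p 0 with rfl | hp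
  · rw [map_zero, mul_zero, degree_zero, nsmul_eq_mul, WithBot.mul_bot (by
      exact_mod_cast (j.zero_le.trans_lt hj).ne'), WithBot.bot_add]
  · rw [degree_mul, degree_X_pow, degree_eq_natDegree ((expand_ne_zero (by omega)).mpr hp),
      degree_eq_natDegree hp, natDegree_expand, nsmul_eq_mul]
    norm_cast
    rw [add_comm, mul_comm]

theorem natDegree_X_pow_mul_expand {j : ℕ} (hj : j < n) {p : ℂ[X]} (hp : p ≠ 0) :
    (X ^ j * expand ℂ n p).natDegree = n * p.natDegree + j := by
  apply natDegree_eq_of_degree_eq_some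
  rw [degree_X_pow_mul_expand hj, degree_eq_natDegree hp]
  norm_cast

theorem degree_interleave (r : Fin n → ℂ[X]) : (interleave n r).degree = vheight n r := by
  rw [interleave_apply, degree_sum_eq_of_disjoint, vheight]
  · simp only [degree_X_pow_mul_expand (Fin.is_lt _)]
  · rintro i ⟨-, hi⟩ j ⟨-, hj⟩ hij hdeg
    simp only [ne_eq, mul_eq_zero, pow_eq_zero_iff', X_ne_zero, false_and, false_or,
      expand_eq_zero i.pos] at hi hj
    have := congrArg (· % n) (natDegree_eq_of_degree_eq hdeg)
    simp only [natDegree_X_pow_mul_expand i.is_lt hi, natDegree_X_pow_mul_expand j.is_lt hj,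
      Nat.mul_add_mod, Nat.mod_eq_of_lt i.is_lt, Nat.mod_eq_of_lt j.is_lt] at this
    exact hij (Fin.ext this)

theorem vheight_eq_bot_iff {r : Fin n → ℂ[X]} : vheight n r = ⊥ ↔ r = 0 := by
  simp only [vheight, Finset.sup_eq_bot_iff, Finset.mem_univ, true_implies,
    ← degree_X_pow_mul_expand (Fin.is_lt _), degree_eq_bot, mul_eq_zero, pow_eq_zero_iff',
    X_ne_zero, false_and, false_or, funext_iff, Pi.zero_apply]
  exact forall_congr' fun j => expand_eq_zero j.pos

theorem interleave_eq_zero_iff {r : Fin n → ℂ[X]} : interleave n r = 0 ↔ r = 0 := by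
  rw [← degree_eq_bot, degree_interleave, vheight_eq_bot_iff]

theorem interleave_smul (c : ℂ[X]) (r : Fin n → ℂ[X]) :
    interleave n (c • r) = expand ℂ n c * interleave n r := by
  simp only [interleave_apply, Pi.smul_apply, smul_eq_mul, map_mul, Finset.mul_sum]
  exact Finset.sum_congr rfl fun j _ => mul_left_comm _ _ _

noncomputable abbrev natHeight (n : ℕ) (r : Fin n → ℂ[X]) : ℕ := (interleave n r).natDegree

theorem vheight_eq_natHeight {r : Fin n → ℂ[X]} (hr : r ≠ 0) :
    vheight n r = natHeight n r := by
  rw [← degree_interleave, degree_eq_natDegree (mt interleave_eq_zero_iff.mp hr)]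

theorem natHeight_smul {c : ℂ[X]} {r : Fin n → ℂ[X]} (hc : c ≠ 0) (hr : r ≠ 0) :
    natHeight n (c • r) = n * c.natDegree + natHeight n r := by
  rw [natHeight, interleave_smul, natDegree_mul ((expand_ne_zero (pos_of_ne_zero hr)).mpr hc)
    (mt interleave_eq_zero_iff.mp hr), natDegree_expand, mul_comm]

theorem leadingCoeff_interleave_smul {r : Fin n → ℂ[X]} (hr : r ≠ 0) (c : ℂ[X]) :
    (interleave n (c • r)).leadingCoeff = c.leadingCoeff * (interleave n r).leadingCoeff := by
  rw [interleave_smul, leadingCoeff_mul, leadingCoeff_expand (pos_of_ne_zero hr)]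

theorem exists_vheight_sub_smul_lt {s t : Fin n → ℂ[X]} (hs : s ≠ 0) (ht : t ≠ 0)
    (hle : natHeight n t ≤ natHeight n s) (hmod : natHeight n t % n = natHeight n s % n) :
    ∃ p : ℂ[X], vheight n (s - p • t) < vheight n s := by
  obtain ⟨k, hk⟩ : n ∣ natHeight n s - natHeight n t := (Nat.modEq_iff_dvd' hle).mp hmod
  have hs' : interleave n s ≠ 0 := mt interleave_eq_zero_iff.mp hs
  have ht' : interleave n t ≠ 0 := mt interleave_eq_zero_iff.mp ht
  set a := (interleave n s).leadingCoeff / (interleave n t).leadingCoeff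
  have ha : a ≠ 0 := div_ne_zero (leadingCoeff_ne_zero.mpr hs') (leadingCoeff_ne_zero.mpr ht')
  have hp : C a * X ^ k ≠ 0 := mul_ne_zero (C_ne_zero.mpr ha) (pow_ne_zero _ X_ne_zero)
  refine ⟨C a * X ^ k, ?_⟩
  rw [← degree_interleave, ← degree_interleave, map_sub]
  refine degree_sub_lt_left ?_ hs' ?_
  · have hpt : natHeight n ((C a * X ^ k) • t) = natHeight n s := by
      rw [natHeight_smul hp ht, natDegree_C_mul_X_pow k a ha]
      omega
    rw [degree_eq_natDegree hs', degree_eq_natDegree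
      (mt interleave_eq_zero_iff.mp (smul_ne_zero hp ht))]
    exact congrArg _ hpt.symm
  · rw [leadingCoeff_interleave_smul ht, leadingCoeff_C_mul_X_pow, div_mul_cancel₀ _
      (leadingCoeff_ne_zero.mpr ht')]

theorem vheight_smul_le_vheight_sum {ι : Type*} [Fintype ι] {v : ι → Fin n → ℂ[X]}
    (hv : ∀ i, v i ≠ 0) (hinj : Injective fun i => natHeight n (v i) % n) (c : ι → ℂ[X])
    (i : ι) : vheight n (c i • v i) ≤ vheight n (∑ j, c j • v j) := by
  rw [← degree_interleave, ← degree_interleave, map_sum, degree_sum_eq_of_disjoint]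
  · exact Finset.le_sup (f := fun j => (interleave n (c j • v j)).degree) (Finset.mem_univ i)
  · rintro j ⟨-, hj⟩ k ⟨-, hk⟩ hjk hdeg
    have hc : ∀ l, interleave n (c l • v l) ≠ 0 → c l ≠ 0 := by
      intro l hl hcl
      rw [hcl, zero_smul, map_zero] at hl
      exact hl rfl
    have hnat : natHeight n (c j • v j) = natHeight n (c k • v k) :=
      natDegree_eq_of_degree_eq hdeg
    rw [natHeight_smul (hc j hj) (hv j), natHeight_smul (hc k hk) (hv k)] at hnat
    have := congrArg (· % n) hnat
    simp only [Nat.mul_add_mod] at this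
    exact hjk (hinj this)

theorem linearIndependent_of_natHeight_injective {ι : Type*} {v : ι → Fin n → ℂ[X]}
    (hv : ∀ i, v i ≠ 0) (hinj : Injective fun i => natHeight n (v i)) :
    LinearIndependent ℂ v :=
  LinearIndependent.of_comp (interleave n) <| Polynomial.linearIndependent_of_natDegree_injective
    (fun i => mt interleave_eq_zero_iff.mp (hv i)) hinj

noncomputable def degreeLTPi (n M : ℕ) : Submodule ℂ (Fin n → ℂ[X]) :=
  LinearMap.range (LinearMap.piMap fun _ : Fin n => (degreeLT ℂ M).subtype)

theorem finrank_degreeLTPi (M : ℕ) : Module.finrank ℂ (degreeLTPi n M) = n * M := by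
  rw [degreeLTPi, LinearMap.finrank_range_of_inj, Module.finrank_pi_fintype]
  · simp [(degreeLTEquiv ℂ M).finrank_eq]
  · intro a b h
    funext j
    exact Subtype.ext (congrFun h j)

theorem mem_degreeLTPi_iff_forall {M : ℕ} {s : Fin n → ℂ[X]} :
    s ∈ degreeLTPi n M ↔ ∀ j, s j ∈ degreeLT ℂ M :=
  ⟨by rintro ⟨a, rfl⟩ j; exact (a j).2, fun h => ⟨fun j => ⟨s j, h j⟩, rfl⟩⟩

theorem mem_degreeLTPi_iff {M : ℕ} {s : Fin n → ℂ[X]} :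
    s ∈ degreeLTPi n M ↔ vheight n s < (n * M : ℕ) := by
  rw [mem_degreeLTPi_iff_forall, vheight, Finset.sup_lt_iff (WithBot.bot_lt_coe _)]
  refine forall_congr' fun j => ?_
  rw [mem_degreeLT, iff_true_intro (Finset.mem_univ j), true_implies]
  rcases eq_or_ne (s j) 0 with h | h
  · rw [h, ← degree_X_pow_mul_expand j.is_lt, map_zero, mul_zero, degree_zero]
    exact iff_of_true (WithBot.bot_lt_coe _) (WithBot.bot_lt_coe _)
  · rw [degree_eq_natDegree h, nsmul_eq_mul]
    norm_cast
    exact (Nat.mul_add_lt_mul_iff j.is_lt).symm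

end VectorPolynomial

open VectorPolynomial

theorem prevSpan_eq_span {n : ℕ} (r : Fin n → Fin n → ℂ[X]) (j : Fin n) :
    prevSpan r j = Submodule.span ℂ[X] (r '' Set.Iio j) := by
  ext s
  rw [SetLike.mem_coe, ← Finset.coe_Iio, Submodule.mem_span_image_finset_iff_exists_fun',
    ← Finset.filter_gt_eq_Iio]
  refine exists_congr fun c => ?_
  simp only [eq_comm (a := s), funext_iff, Finset.sum_apply, Pi.smul_apply, smul_eq_mul]

section GeneratorSequence

variable {n : ℕ} {S : Submodule ℂ[X] (Fin n → ℂ[X])} {r : Fin n → Fin n → ℂ[X]}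

theorem IsGenSeq.natHeight_le (hr : IsGenSeq (S : Set (Fin n → ℂ[X])) r) {j : Fin n}
    {s : Fin n → ℂ[X]} (hs : s ∈ S) (hsj : s ∉ prevSpan r j) (hs0 : s ≠ 0) :
    natHeight n (r j) ≤ natHeight n s := by
  have := (hr j).2.2 s ⟨hs, hsj⟩ hs0
  rwa [vheight_eq_natHeight (hr j).1, vheight_eq_natHeight hs0, Nat.cast_le] at this

theorem IsGenSeq.natHeight_mono (hr : IsGenSeq (S : Set (Fin n → ℂ[X])) r) :
    Monotone fun j => natHeight n (r j) := by
  intro i j hij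
  refine hr.natHeight_le (hr j).2.1.1 (fun hji => (hr j).2.1.2 ?_) (hr j).1
  rw [prevSpan_eq_span] at hji ⊢
  exact Submodule.span_mono (Set.image_mono (Set.Iio_subset_Iio hij)) hji

/-- The heights of the generators are pairwise incongruent modulo `n`: otherwise a later
generator could be reduced by a multiple of an earlier one, contradicting its minimality. -/
theorem IsGenSeq.injective_natHeight_mod (hr : IsGenSeq (S : Set (Fin n → ℂ[X])) r) :
    Injective fun j => natHeight n (r j) % n := by
  intro i j hmod
  by_contra hne
  wlog hij : i < j generalizing i j
  · exact this hmod.symm (Ne.symm hne) ((not_lt.mp hij).lt_of_ne (Ne.symm hne))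
  obtain ⟨p, hp⟩ :=
    exists_vheight_sub_smul_lt (hr j).1 (hr i).1 (hr.natHeight_mono hij.le) hmod
  have hspan := prevSpan_eq_span r j
  have hri : p • r i ∈ prevSpan r j := by
    rw [hspan]
    exact Submodule.smul_mem _ p (Submodule.subset_span ⟨i, hij, rfl⟩)
  have hw : r j - p • r i ∉ prevSpan r j := by
    intro hw
    apply (hr j).2.1.2
    rw [hspan] at hw hri ⊢
    simpa using add_mem hw hri
  have hw0 : r j - p • r i ≠ 0 := by
    rintro h
    rw [h, hspan] at hw
    exact hw (zero_mem _)
  exact hp.not_ge ((hr j).2.2 _ ⟨sub_mem (hr j).2.1.1 (S.smul_mem p (hr i).2.1.1), hw⟩ hw0)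

theorem IsGenSeq.exists_natHeight_mod_eq (hr : IsGenSeq (S : Set (Fin n → ℂ[X])) r)
    (hn : 0 < n) (b : ℕ) : ∃ j, natHeight n (r j) % n = b % n := by
  obtain ⟨j, hj⟩ :=
    (Fin.bijective_mod_of_injective hr.injective_natHeight_mod).2 ⟨b % n, Nat.mod_lt _ hn⟩
  exact ⟨j, congrArg Fin.val hj⟩

theorem IsGenSeq.span_eq (hr : IsGenSeq (S : Set (Fin n → ℂ[X])) r) :
    Submodule.span ℂ[X] (Set.range r) = S := by
  refine le_antisymm (Submodule.span_le.mpr (Set.range_subset_iff.mpr fun j => (hr j).2.1.1)) ?_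
  intro s hs
  induction hb : vheight n s using WellFoundedLT.induction generalizing s with
  | ind b ih =>
    rcases eq_or_ne s 0 with rfl | hs0
    · exact zero_mem _
    obtain ⟨j, hj⟩ := hr.exists_natHeight_mod_eq (pos_of_ne_zero hs0) (natHeight n s)
    by_cases hsj : s ∈ prevSpan r j
    · rw [prevSpan_eq_span] at hsj
      exact Submodule.span_mono (Set.image_subset_range _ _) hsj
    obtain ⟨p, hp⟩ := exists_vheight_sub_smul_lt hs0 (hr j).1 (hr.natHeight_le hs hsj hs0) hj
    have hrest := ih _ (hb ▸ hp) (sub_mem hs (S.smul_mem p (hr j).2.1.1)) rfl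
    rw [← sub_add_cancel s (p • r j)]
    exact add_mem hrest (Submodule.smul_mem _ p (Submodule.subset_span ⟨j, rfl⟩))

/-- Indexed so that exactly the multiples of height `< n * M` occur. -/
noncomputable def generatorMultiples (r : Fin n → Fin n → ℂ[X]) (M : ℕ) :
    (Σ j, Fin (M - natHeight n (r j) / n)) → Fin n → ℂ[X] :=
  fun p => (X : ℂ[X]) ^ (p.2 : ℕ) • r p.1

theorem IsGenSeq.generatorMultiples_ne_zero (hr : IsGenSeq (S : Set (Fin n → ℂ[X])) r)
    {M : ℕ} (p : Σ j, Fin (M - natHeight n (r j) / n)) : generatorMultiples r M p ≠ 0 :=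
  smul_ne_zero (pow_ne_zero _ X_ne_zero) (hr p.1).1

theorem IsGenSeq.natHeight_generatorMultiples (hr : IsGenSeq (S : Set (Fin n → ℂ[X])) r)
    {M : ℕ} (p : Σ j, Fin (M - natHeight n (r j) / n)) :
    natHeight n (generatorMultiples r M p) = n * p.2 + natHeight n (r p.1) := by
  rw [generatorMultiples, natHeight_smul (pow_ne_zero _ X_ne_zero) (hr p.1).1, natDegree_X_pow]

theorem IsGenSeq.linearIndependent_generatorMultiples
    (hr : IsGenSeq (S : Set (Fin n → ℂ[X])) r) (M : ℕ) :
    LinearIndependent ℂ (generatorMultiples r M) := by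
  refine linearIndependent_of_natHeight_injective hr.generatorMultiples_ne_zero ?_
  rintro ⟨i, d⟩ ⟨j, e⟩ h
  have h' : n * d + natHeight n (r i) = n * e + natHeight n (r j) :=
    (hr.natHeight_generatorMultiples _).symm.trans (h.trans (hr.natHeight_generatorMultiples _))
  obtain rfl : i = j := hr.injective_natHeight_mod (by
    simpa only [Nat.mul_add_mod] using congrArg (· % n) h')
  obtain rfl : d = e := Fin.ext (Nat.eq_of_mul_eq_mul_left i.pos (Nat.add_right_cancel h'))
  rfl

theorem IsGenSeq.degreeLTPi_inf_eq_span (hr : IsGenSeq (S : Set (Fin n → ℂ[X])) r) (M : ℕ) :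
    degreeLTPi n M ⊓ S.restrictScalars ℂ =
      Submodule.span ℂ (Set.range (generatorMultiples r M)) := by
  apply le_antisymm
  · rintro s ⟨hsW, hsS⟩
    replace hsS : s ∈ S := hsS
    rw [← hr.span_eq, Submodule.mem_span_range_iff_exists_fun] at hsS
    obtain ⟨c, rfl⟩ := hsS
    refine Submodule.sum_mem _ fun j _ => ?_
    rcases eq_or_ne (c j) 0 with hc | hc
    · simp [hc]
    have hlt := (vheight_smul_le_vheight_sum (fun i => (hr i).1) hr.injective_natHeight_mod c j
      ).trans_lt (mem_degreeLTPi_iff.mp hsW)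
    rw [vheight_eq_natHeight (smul_ne_zero hc (hr j).1), natHeight_smul hc (hr j).1, Nat.cast_lt,
      Nat.mul_add_lt_mul_iff_add_div_lt j.pos] at hlt
    have hcj : c j ∈ degreeLT ℂ (M - natHeight n (r j) / n) := by
      rw [mem_degreeLT, degree_eq_natDegree hc, Nat.cast_lt]
      omega
    refine Submodule.span_mono ?_ (smul_mem_span_X_pow_smul hcj (r j))
    rintro _ ⟨d, rfl⟩
    exact ⟨⟨j, d⟩, rfl⟩
  · rw [Submodule.span_le]
    rintro _ ⟨⟨j, d⟩, rfl⟩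
    refine ⟨mem_degreeLTPi_iff.mpr ?_, S.smul_mem _ (hr j).2.1.1⟩
    rw [vheight_eq_natHeight (hr.generatorMultiples_ne_zero _), hr.natHeight_generatorMultiples,
      Nat.cast_lt, Nat.mul_add_lt_mul_iff_add_div_lt j.pos]
    omega

theorem IsGenSeq.finrank_degreeLTPi_inf (hr : IsGenSeq (S : Set (Fin n → ℂ[X])) r) (M : ℕ) :
    Module.finrank ℂ ↥(degreeLTPi n M ⊓ S.restrictScalars ℂ) =
      ∑ j, (M - natHeight n (r j) / n) := by
  rw [hr.degreeLTPi_inf_eq_span, finrank_span_eq_card (hr.linearIndependent_generatorMultiples M),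
    Fintype.card_sigma]
  simp

end GeneratorSequence

section Interpolation

variable {n N : ℕ} {z : Fin N → ℂ} {α : Fin N → Fin n → ℂ}

variable (z α) in
noncomputable def interpEval : (Fin n → ℂ[X]) →ₗ[ℂ] Fin N → ℂ where
  toFun r k := ∑ j, α k j * (r j).eval (z k)
  map_add' r s := by
    funext k
    simp only [Pi.add_apply, eval_add, mul_add, Finset.sum_add_distrib]
  map_smul' a r := by
    funext k
    simp only [Pi.smul_apply, eval_smul, smul_eq_mul, Finset.mul_sum, RingHom.id_apply]
    exact Finset.sum_congr rfl fun j _ => mul_left_comm _ _ _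

theorem interpEval_apply (r : Fin n → ℂ[X]) (k : Fin N) :
    interpEval z α r k = ∑ j, α k j * (r j).eval (z k) := rfl

variable (z α) in
def interpSubmodule : Submodule ℂ[X] (Fin n → ℂ[X]) where
  carrier := interpSet z α
  add_mem' {r s} hr hs k := by
    simpa [interpEval_apply, hr k, hs k] using congrFun (map_add (interpEval z α) r s) k
  zero_mem' k := by simp
  smul_mem' c r hr k := by
    simp only [Pi.smul_apply, smul_eq_mul, eval_mul, mul_left_comm _ (c.eval (z k)),
      ← Finset.mul_sum, hr k, mul_zero]

theorem ker_interpEval :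
    LinearMap.ker (interpEval z α) = (interpSubmodule z α).restrictScalars ℂ := by
  ext r
  simp only [LinearMap.mem_ker, funext_iff, interpEval_apply, Pi.zero_apply]
  rfl

theorem interpEval_single (j : Fin n) (p : ℂ[X]) (k : Fin N) :
    interpEval z α (Pi.single j p) k = α k j * p.eval (z k) := by
  rw [interpEval_apply, Finset.sum_eq_single j (fun i _ hi => by simp [hi]) (by simp)]
  simp

/-- Testing against `Pi.single j P`, with `P` vanishing at all nodes except `z k₀`, isolates the
fibre of `k₀`, where the independence of the `α k` applies. -/
theorem eq_zero_of_forall_sum_interpEval_mul_eq_zero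
    (hα : ∀ w : ℂ, LinearIndependent ℂ (fun k : {k : Fin N // z k = w} => α k.val))
    {M : ℕ} (hNM : N < M) {c : Fin N → ℂ}
    (hc : ∀ s ∈ degreeLTPi n M, ∑ k, interpEval z α s k * c k = 0) : c = 0 := by
  classical
  funext k₀
  set P := Lagrange.nodal (Finset.univ.filter fun k => z k ≠ z k₀) z
  have hPM : P ∈ degreeLT ℂ M := by
    rw [mem_degreeLT, Lagrange.degree_nodal, Nat.cast_lt]
    exact (Finset.card_filter_le _ _).trans_lt (by simpa using hNM)
  have hPk₀ : P.eval (z k₀) ≠ 0 := Lagrange.eval_nodal_not_at_node (by simp [eq_comm])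
  have hPk : ∀ k, z k ≠ z k₀ → P.eval (z k) = 0 := fun k hk =>
    Lagrange.eval_nodal_at_node (by simp [hk])
  have hfibre : ∀ j, P.eval (z k₀) * ∑ k : {k // z k = z k₀}, c k * α k j = 0 := by
    intro j
    have hPj : Pi.single j P ∈ degreeLTPi n M := mem_degreeLTPi_iff_forall.mpr fun i => by
      rcases eq_or_ne i j with rfl | hij
      · simpa using hPM
      · simp [hij]
    calc P.eval (z k₀) * ∑ k : {k // z k = z k₀}, c k * α k j
        = ∑ k ∈ Finset.univ.filter (fun k => z k = z k₀), P.eval (z k₀) * (c k * α k j) := by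
          rw [Finset.mul_sum]
          exact (Finset.sum_subtype _ (fun k => by simp)
            fun k => P.eval (z k₀) * (c k * α k j)).symm
      _ = ∑ k ∈ Finset.univ.filter (fun k => z k = z k₀), α k j * P.eval (z k) * c k :=
          Finset.sum_congr rfl fun k hk => by rw [(Finset.mem_filter.mp hk).2]; ring
      _ = 0 := by
          rw [Finset.sum_filter_of_ne fun k _ hk => by_contra fun hzk => hk (by simp [hPk k hzk])]
          simpa only [interpEval_single] using hc _ hPj
  exact Fintype.linearIndependent_iff.mp (hα (z k₀)) (fun k => c k) (by
    funext j
    simpa [Finset.sum_apply, hPk₀] using hfibre j) ⟨k₀, rfl⟩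

theorem map_interpEval_degreeLTPi_eq_top
    (hα : ∀ w : ℂ, LinearIndependent ℂ (fun k : {k : Fin N // z k = w} => α k.val))
    {M : ℕ} (hNM : N < M) : (degreeLTPi n M).map (interpEval z α) = ⊤ := by
  classical
  rw [← Submodule.dualAnnihilator_eq_bot_iff, Submodule.eq_bot_iff]
  intro g hg
  set c : Fin N → ℂ := fun k => g fun l => if k = l then 1 else 0
  have hgc : ∀ x, g x = ∑ k, x k * c k := fun x => by
    simp only [LinearMap.pi_apply_eq_sum_univ g x, smul_eq_mul, c]
  have hc : c = 0 := eq_zero_of_forall_sum_interpEval_mul_eq_zero hα hNM fun s hs => by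
    rw [← hgc]
    exact (Submodule.mem_dualAnnihilator g).mp hg _ (Submodule.mem_map_of_mem hs)
  ext x
  simp [hgc, hc]

instance (M : ℕ) : FiniteDimensional ℂ (degreeLTPi n M) := Module.Finite.range _

theorem finrank_degreeLTPi_inf_interpSubmodule
    (hα : ∀ w : ℂ, LinearIndependent ℂ (fun k : {k : Fin N // z k = w} => α k.val))
    {M : ℕ} (hNM : N < M) :
    Module.finrank ℂ ↥(degreeLTPi n M ⊓ (interpSubmodule z α).restrictScalars ℂ) + N = n * M := by
  have h := LinearMap.finrank_range_add_finrank_ker ((interpEval z α).domRestrict (degreeLTPi n M))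
  rw [LinearMap.range_domRestrict, map_interpEval_degreeLTPi_eq_top hα hNM, finrank_top,
    Module.finrank_fin_fun, LinearMap.ker_domRestrict, finrank_degreeLTPi, ker_interpEval] at h
  have hker := (Submodule.equivMapOfInjective _ (degreeLTPi n M).injective_subtype
    ((interpSubmodule z α).restrictScalars ℂ |>.comap (degreeLTPi n M).subtype)).finrank_eq
  rw [Submodule.map_comap_subtype] at hker
  omega

end Interpolation

theorem stmt8_general
    (n N : ℕ)
    (z : Fin N → ℂ) (α : Fin N → Fin n → ℂ)
    (hα_li : ∀ w : ℂ,
      LinearIndependent ℂ (fun k : {k : Fin N // z k = w} => α k.val))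
    (r : Fin n → Fin n → Polynomial ℂ) (hr : IsGenSeq (interpSet z α) r) :
    ∑ j : Fin n, vheight n (r j)
      = ((N * n + n * (n - 1) / 2 : ℕ) : WithBot ℕ) := by
  replace hr : IsGenSeq (interpSubmodule z α : Set (Fin n → ℂ[X])) r := hr
  set M := N + ∑ j, natHeight n (r j) + 1
  have hqM (j : Fin n) : natHeight n (r j) / n < M := by
    have := Finset.single_le_sum (fun i _ => Nat.zero_le (natHeight n (r i))) (Finset.mem_univ j)
    have := Nat.div_le_self (natHeight n (r j)) n
    omega
  have hq : ∑ j, natHeight n (r j) / n = N := by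
    have hcount := hr.finrank_degreeLTPi_inf M
    have hdim := finrank_degreeLTPi_inf_interpSubmodule hα_li (show N < M by omega)
    have : ∑ j, (M - natHeight n (r j) / n) + ∑ j, natHeight n (r j) / n = n * M := by
      rw [← Finset.sum_add_distrib, Finset.sum_congr rfl fun j _ => Nat.sub_add_cancel (hqM j).le]
      simp
    omega
  have hsum : ∑ j, natHeight n (r j) = N * n + n * (n - 1) / 2 := by
    rw [← Fin.sum_mod_of_injective hr.injective_natHeight_mod, ← hq, Finset.sum_mul,
      ← Finset.sum_add_distrib]
    exact Finset.sum_congr rfl fun j _ => by rw [mul_comm]; exact (Nat.div_add_mod _ _).symm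
  rw [← hsum, Nat.cast_sum]
  exact Finset.sum_congr rfl fun j _ => vheight_eq_natHeight (hr j).1

/-- Sum of heights of the generators equals Nn + n(n−1)/2. -/
theorem stmt8
    (n N : ℕ) (hn : 0 < n) (hnN : n < N)
    (z : Fin N → ℂ) (α : Fin N → Fin n → ℂ)
    (hα_ne : ∀ k, α k ≠ 0)
    (hα_col : ∀ j : Fin n, ∃ k, α k j ≠ 0)
    (hα_li : ∀ w : ℂ,
      LinearIndependent ℂ (fun k : {k : Fin N // z k = w} => α k.val))
    (r : Fin n → Fin n → Polynomial ℂ) (hr : IsGenSeq (interpSet z α) r) :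
    ∑ j : Fin n, vheight n (r j)
      = ((N * n + n * (n - 1) / 2 : ℕ) : WithBot ℕ) :=
  stmt8_general n N z α hα_li r hr
end

section
/- For every nonnegative integer s, either there exists k ∈ {1,…,N} such that s = h(p_k), or there exist j ∈ {1,…,n} and an integer l ≥ 0 such that s = h(q_j) + n·l. -/
open Polynomial Matrix

/-!
For an index `k` (counted from `1`) that is not a degeneration index, say `m c < k < m (c + 1)`,
the entry `𝒜 k (k + n - c)` is positive and every later entry of row `k` vanishes, so the
recurrence of row `k` expresses `p (k + n - c)` as `z • p k` minus lower terms and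
`h(p (k + n - c)) = h(p k) + n`. Starting from `h(p k) = k - 1` for `k ≤ n` (the matrix `𝒯` is
triangular) this computes all heights `h(p k)`, which turn out strictly increasing in `k`;
in the same way row `m j` gives `h(q j) = h(p (m j)) + n`. Following the chains `k ↦ k + n - c`
from the heights `0, …, n - 1`, each chain either continues inside `1, …, N` or stops at some
`m j`, after which the heights `h(q j) + n l` take over; so every `s` is reached.
-/

section vheight

variable {n : ℕ}

lemma le_vheight (r : Fin n → ℂ[X]) (j : Fin n) :
    n • (r j).degree + ((j : ℕ) : WithBot ℕ) ≤ vheight n r :=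
  Finset.le_sup (f := fun j : Fin n => n • (r j).degree + ((j : ℕ) : WithBot ℕ))
    (Finset.mem_univ j)

lemma nsmul_withBot_bot (hn : n ≠ 0) : n • (⊥ : WithBot ℕ) = ⊥ := by
  obtain ⟨k, rfl⟩ := Nat.exists_eq_succ_of_ne_zero hn
  rw [succ_nsmul, WithBot.add_bot]

lemma vheight_zero : vheight n (fun _ => 0) = ⊥ :=
  (Finset.sup_eq_bot_iff _ _).mpr fun j _ => by
    rw [degree_zero, nsmul_withBot_bot j.pos.ne', WithBot.bot_add]

lemma vheight_neg (r : Fin n → ℂ[X]) : vheight n (fun j => -r j) = vheight n r :=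
  Finset.sup_congr rfl fun j _ => by rw [degree_neg]

lemma vheight_C_mul {a : ℂ} (ha : a ≠ 0) (r : Fin n → ℂ[X]) :
    vheight n (fun j => C a * r j) = vheight n r :=
  Finset.sup_congr rfl fun j _ => by rw [degree_C_mul ha]

lemma vheight_X_mul (r : Fin n → ℂ[X]) :
    vheight n (fun j => X * r j) = vheight n r + (n : WithBot ℕ) := by
  rw [vheight, vheight, Finset.apply_sup_eq_sup_comp_of_linearOrder (· + (n : WithBot ℕ))
    (fun _ _ h => add_le_add_left h _) (WithBot.bot_add _)]
  refine Finset.sup_congr rfl fun j _ => ?_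
  rw [Function.comp_apply, mul_comm, degree_mul_X, nsmul_add, add_right_comm, nsmul_one]

lemma vheight_add_le (r s : Fin n → ℂ[X]) :
    vheight n (fun j => r j + s j) ≤ max (vheight n r) (vheight n s) := by
  refine Finset.sup_le fun j _ => ?_
  rcases le_max_iff.mp (degree_add_le (r j) (s j)) with h | h
  · exact le_max_of_le_left (le_trans (by gcongr) (le_vheight r j))
  · exact le_max_of_le_right (le_trans (by gcongr) (le_vheight s j))

lemma vheight_sub_of_lt {r s : Fin n → ℂ[X]} (h : vheight n s < vheight n r) :
    vheight n (fun j => r j - s j) = vheight n r := by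
  refine le_antisymm ?_ ?_
  · simpa only [sub_eq_add_neg, vheight_neg, max_eq_left h.le] using
      vheight_add_le r (fun j => -s j)
  · have := vheight_add_le (fun j => r j - s j) s
    simp only [sub_add_cancel] at this
    exact (le_max_iff.mp this).resolve_right h.not_ge

lemma vheight_sum_lt {ι : Type*} (s : Finset ι) (f : ι → Fin n → ℂ[X]) {c : ℕ}
    (h : ∀ l ∈ s, vheight n (f l) < c) : vheight n (fun j => ∑ l ∈ s, f l j) < c := by
  classical
  induction s using Finset.cons_induction with
  | empty =>
    simp only [Finset.sum_empty, vheight_zero]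
    exact WithBot.bot_lt_coe c
  | cons a s ha ih =>
    simp only [Finset.sum_cons]
    exact (vheight_add_le _ _).trans_lt (max_lt (h a (Finset.mem_cons_self a s))
      (ih fun l hl => h l (Finset.mem_cons_of_mem hl)))

lemma vheight_X_mul_sub_sum {ι : Type*} (s : Finset ι) (a : ι → ℂ)
    (g : ι → Fin n → ℂ[X]) {r : Fin n → ℂ[X]} {c : ℕ} (hr : vheight n r = c)
    (h : ∀ l ∈ s, a l ≠ 0 → vheight n (g l) < (c + n : ℕ)) :
    vheight n (fun j => X * r j - ∑ l ∈ s, C (a l) * g l j) = (c + n : ℕ) := by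
  have hXr : vheight n (fun j => X * r j) = (c + n : ℕ) := by
    rw [vheight_X_mul, hr, Nat.cast_add]
  rw [vheight_sub_of_lt, hXr]
  refine hXr ▸ vheight_sum_lt s _ fun l hl => ?_
  by_cases hal : a l = 0
  · simp only [hal, map_zero, zero_mul, vheight_zero]
    exact WithBot.bot_lt_coe _
  · rw [vheight_C_mul hal]
    exact h l hl hal

lemma vheight_C_of_upper {i : Fin n} (a : Fin n → ℂ) (ha : a i ≠ 0)
    (hlt : ∀ j, i < j → a j = 0) : vheight n (fun j => C (a j)) = (i : ℕ) := by
  refine le_antisymm (Finset.sup_le fun j _ => ?_) ?_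
  · rcases le_or_gt j i with hji | hij
    · calc n • (C (a j)).degree + ((j : ℕ) : WithBot ℕ)
          ≤ n • 0 + ((j : ℕ) : WithBot ℕ) := by gcongr; exact degree_C_le
        _ ≤ (i : ℕ) := by rw [smul_zero, zero_add]; exact_mod_cast hji
    · beta_reduce
      rw [hlt j hij, map_zero, degree_zero, nsmul_withBot_bot j.pos.ne', WithBot.bot_add]
      exact bot_le
  · simpa only [degree_C ha, smul_zero, zero_add] using le_vheight (fun j => C (a j)) i

end vheight

lemma exists_lt_le_succ (f : ℕ → ℕ) {n i : ℕ} (h0 : f 0 < i) (hn : i ≤ f n) :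
    ∃ c < n, f c < i ∧ i ≤ f (c + 1) := by
  classical
  have hex : ∃ j, i ≤ f j := ⟨n, hn⟩
  have hpos : Nat.find hex ≠ 0 := fun h => (h ▸ Nat.find_spec hex).not_gt h0
  have hle : Nat.find hex ≤ n := Nat.find_min' hex hn
  refine ⟨Nat.find hex - 1, by omega, not_le.mp (Nat.find_min hex (by omega)), ?_⟩
  rw [Nat.sub_add_cancel (Nat.one_le_iff_ne_zero.mpr hpos)]
  exact Nat.find_spec hex

section indexHeight

variable {n : ℕ} {m : ℕ → ℕ}

lemma apply_add_sub_le (hm : ∀ j < n, m j < m (j + 1)) {j j' : ℕ} (h : j ≤ j') (hj' : j' ≤ n) :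
    m j + (j' - j) ≤ m j' := by
  induction j', h using Nat.le_induction with
  | base => simp
  | succ t hjt ih => have := hm t (by omega); have := ih (by omega); omega

/-- For `n < i ≤ m n`, the `c < n` with `m c < i + c - n < m (c + 1)`: the index `i` is reached
by the step `k ↦ k + n - c` from the index `k = i + c - n` of the segment `(m c, m (c + 1))`. -/
def predSegment (n : ℕ) (m : ℕ → ℕ) (i : ℕ) : ℕ :=
  ((Finset.Icc 1 (n - 1)).filter fun j => m j + n < i + j).card

lemma predSegment_lt (hn : 0 < n) (i : ℕ) : predSegment n m i < n :=
  (Finset.card_filter_le _ _).trans_lt (by simp only [Nat.card_Icc]; omega)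

lemma predSegment_mono : Monotone (predSegment n m) := fun _ _ h =>
  Finset.card_le_card fun j hj => by
    simp only [Finset.mem_filter] at hj ⊢
    exact ⟨hj.1, by omega⟩

lemma predSegment_le {i c : ℕ} (h : ∀ j, c < j → j < n → i + j ≤ m j + n) :
    predSegment n m i ≤ c := by
  refine (Finset.card_le_card fun j hj => ?_).trans (Nat.card_Icc 1 c).le
  simp only [Finset.mem_filter, Finset.mem_Icc] at hj ⊢
  by_contra hjc
  have := h j (by omega) (by omega)
  omega

lemma predSegment_add_sub (hm : ∀ j < n, m j < m (j + 1)) {c k : ℕ} (hc : c < n)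
    (hlo : m c < k) (hhi : k < m (c + 1)) : predSegment n m (k + n - c) = c := by
  have hcm := apply_add_sub_le hm (Nat.zero_le c) hc.le
  suffices ((Finset.Icc 1 (n - 1)).filter fun j => m j + n < k + n - c + j) = Finset.Icc 1 c by
    rw [predSegment, this, Nat.card_Icc, Nat.add_sub_cancel]
  ext j
  simp only [Finset.mem_filter, Finset.mem_Icc]
  rcases le_or_gt j c with hjc | hcj
  · have := apply_add_sub_le hm hjc hc.le
    omega
  · by_cases hjn : j ≤ n - 1
    · have := apply_add_sub_le hm (show c + 1 ≤ j by omega) (by omega)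
      omega
    · omega

/-- The height `h(p_i)` of the `i`-th row (counted from `1`) predicted by the band structure:
every index `i > n` is reached by one step `k ↦ k + n - c` from an index `k` of segment `c`,
raising the height by `n`. The `max … 1` only ensures termination for `n = 0`. -/
def indexHeight (n : ℕ) (m : ℕ → ℕ) (i : ℕ) : ℕ :=
  if i ≤ n then i - 1 else indexHeight n m (i - max (n - predSegment n m i) 1) + n
termination_by i
decreasing_by omega

lemma indexHeight_of_le {i : ℕ} (h : i ≤ n) : indexHeight n m i = i - 1 := by
  rw [indexHeight, if_pos h]

lemma indexHeight_of_lt (hn : 0 < n) {i : ℕ} (h : n < i) :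
    indexHeight n m i = indexHeight n m (i + predSegment n m i - n) + n := by
  have := predSegment_lt (m := m) hn i
  rw [indexHeight, if_neg h.not_ge]
  congr 2
  omega

lemma indexHeight_strictMonoOn (hn : 0 < n) : StrictMonoOn (indexHeight n m) (Set.Ici 1) := by
  rintro i hi i' - hii'
  induction i' using Nat.strong_induction_on generalizing i with
  | _ i' ih =>
    rcases le_or_gt i' n with hi'n | hi'n
    · rw [indexHeight_of_le hi'n, indexHeight_of_le (hii'.le.trans hi'n)]
      simp only [Set.mem_Ici] at hi
      omega
    rw [indexHeight_of_lt hn hi'n]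
    rcases le_or_gt i n with hin | hin
    · rw [indexHeight_of_le hin]
      omega
    rw [indexHeight_of_lt hn hin]
    have := predSegment_lt (m := m) hn i'
    have := predSegment_mono (m := m) (n := n) hii'.le
    have := ih (i' + predSegment n m i' - n) (by omega) (i := i + predSegment n m i - n)
      (by simp only [Set.mem_Ici]; omega) (by omega)
    omega

lemma indexHeight_add_sub (hn : 0 < n) (hm : ∀ j < n, m j < m (j + 1)) {c k : ℕ} (hc : c < n)
    (hlo : m c < k) (hhi : k < m (c + 1)) :
    indexHeight n m (k + n - c) = indexHeight n m k + n := by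
  have := apply_add_sub_le hm (Nat.zero_le c) hc.le
  rw [indexHeight_of_lt hn (by omega), predSegment_add_sub hm hc hlo hhi]
  congr 2
  omega

lemma exists_add_sub_eq (hm0 : m 0 = 0) {i : ℕ} (hi : n < i) (hin : i ≤ m n) :
    ∃ c < n, ∃ k, m c < k ∧ k < m (c + 1) ∧ i = k + n - c := by
  obtain ⟨c, hc, hlo, hhi⟩ := exists_lt_le_succ (fun j => m j + n - j) (n := n) (i := i)
    (by simpa [hm0] using hi) (by simpa using hin)
  exact ⟨c, hc, i + c - n, by omega, by omega, by omega⟩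

lemma indexHeight_lt_add (hn : 0 < n) (hm : ∀ j < n, m j < m (j + 1)) {t l : ℕ} (ht : 1 ≤ t)
    (htn : t ≤ n) (hl : 1 ≤ l) (hlt : l + t ≤ m t + n) :
    indexHeight n m l < indexHeight n m (m t) + n := by
  have hmt := apply_add_sub_le hm (Nat.zero_le t) htn
  have hmono := (indexHeight_strictMonoOn (m := m) hn).le_iff_le (a := l) (b := m t)
    (by simpa using hl) (by simp only [Set.mem_Ici]; omega)
  rcases le_or_gt l (m t) with hle | hgt
  · have := hmono.mpr hle
    omega
  rcases le_or_gt l n with hln | hln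
  · rw [indexHeight_of_le hln]
    omega
  have hseg : predSegment n m l ≤ t - 1 := predSegment_le fun j htj hjn => by
    have := apply_add_sub_le hm (show t ≤ j by omega) hjn.le
    omega
  rw [indexHeight_of_lt hn hln, add_lt_add_iff_right]
  exact (indexHeight_strictMonoOn hn) (by simp only [Set.mem_Ici]; omega)
    (by simp only [Set.mem_Ici]; omega) (by omega)

lemma indexHeight_cover {N : ℕ} (hn : 0 < n) (hm0 : m 0 = 0) (hmN : m n = N)
    (hm : ∀ j < n, m j < m (j + 1)) (hmle : ∀ j, 1 ≤ j → j ≤ n → m j ≤ N - n + j) (s : ℕ) :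
    (∃ i, 1 ≤ i ∧ i ≤ N ∧ indexHeight n m i = s) ∨
      ∃ t l, 1 ≤ t ∧ t ≤ n ∧ s = indexHeight n m (m t) + n + n * l := by
  have hnN := hmN ▸ apply_add_sub_le hm (Nat.zero_le n) le_rfl
  induction s using Nat.strong_induction_on with
  | _ s ih =>
    rcases lt_or_ge s n with hsn | hns
    · exact Or.inl ⟨s + 1, by omega, by omega, by rw [indexHeight_of_le (by omega)]; rfl⟩
    rcases ih (s - n) (by omega) with ⟨i, hi, hiN, hs⟩ | ⟨t, l, ht, htn, hs⟩
    · by_cases hex : ∃ t, 1 ≤ t ∧ t ≤ n ∧ m t = i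
      · obtain ⟨t, ht, htn, rfl⟩ := hex
        exact Or.inr ⟨t, 0, ht, htn, by omega⟩
      obtain ⟨c, hc, hlo, hhi⟩ := exists_lt_le_succ m (n := n) (i := i) (by omega) (by omega)
      have hhi' : i < m (c + 1) := hhi.lt_of_ne fun h => hex ⟨c + 1, by omega, by omega, h.symm⟩
      have := hmle (c + 1) (by omega) (by omega)
      refine Or.inl ⟨i + n - c, by omega, by omega, ?_⟩
      rw [indexHeight_add_sub hn hm hc hlo hhi']
      omega
    · exact Or.inr ⟨t, l + 1, ht, htn, by rw [Nat.mul_succ]; omega⟩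

end indexHeight

namespace MatrixClassM

variable {n N : ℕ} {A : Matrix (Fin N) (Fin N) ℝ} {m : ℕ → ℕ}

lemma apply_eq_zero (hA : MatrixClassM n N A m) {c : ℕ} (hc : c ≤ n) {r l : Fin N}
    (hr : m c ≤ r + 1) (hl : r + n - c < l) : A r l = 0 := by
  rw [hA.symm.apply l r]
  rcases le_or_gt (l : ℕ) (r + n) with hlr | hlr
  · have := apply_add_sub_le hA.m_mono (show r + n - l + 1 ≤ c by omega) hc
    exact hA.d_zero (r + n - l) (by omega) r l (by omega) (by omega) (by omega)
  · exact hA.band l r (lt_abs.mpr (Or.inl (by omega)))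

lemma apply_pos (hA : MatrixClassM n N A m) {c : ℕ} (hc : c < n) {k l : Fin N}
    (hlo : m c < k + 1) (hhi : k + 1 < m (c + 1)) (hl : (l : ℕ) = k + (n - c)) : 0 < A k l :=
  hA.symm.apply k l ▸ hA.d_pos c hc k l hl hlo hhi

end MatrixClassM

section vheight_phi

variable {n N : ℕ} {A : Matrix (Fin N) (Fin N) ℝ} {m : ℕ → ℕ} {φ : Fin n → Fin N → ℂ[X]}

lemma vheight_phi_castLE (hnN : n < N) {T : Matrix (Fin n) (Fin n) ℝ}
    (hT_upper : ∀ i j : Fin n, j < i → T i j = 0) (hT_diag : ∀ j : Fin n, T j j ≠ 0)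
    (hφ_init : ∀ (j : Fin n) (i : Fin n), φ j (Fin.castLE (le_of_lt hnN) i) = C ((T j i : ℂ)))
    (i : Fin n) : vheight n (fun j => φ j (Fin.castLE (le_of_lt hnN) i)) = (i : ℕ) := by
  simp only [hφ_init]
  exact vheight_C_of_upper (fun j => (T j i : ℂ)) (by exact_mod_cast hT_diag i)
    fun j hij => by simp [hT_upper j i hij]

lemma vheight_phi_of_row (hA : MatrixClassM n N A m)
    (hφ_rec : ∀ (j : Fin n) (k : Fin N), (∀ i, 1 ≤ i → i ≤ n → m i ≠ (k : ℕ) + 1) →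
      ∑ l, C ((A k l : ℂ)) * φ j l = X * φ j k)
    {c : ℕ} (hc : c < n) {k K : Fin N} (hlo : m c < k + 1) (hhi : k + 1 < m (c + 1))
    (hK : (K : ℕ) = k + (n - c)) {h : ℕ} (hk : vheight n (fun j => φ j k) = h)
    (hlt : ∀ l < K, vheight n (fun j => φ j l) < (h + n : ℕ)) :
    vheight n (fun j => φ j K) = (h + n : ℕ) := by
  have hregular : ∀ i, 1 ≤ i → i ≤ n → m i ≠ (k : ℕ) + 1 := fun i hi hin => by
    rcases le_or_gt i c with hic | hci
    · have := apply_add_sub_le hA.m_mono hic hc.le; omega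
    · have := apply_add_sub_le hA.m_mono (show c + 1 ≤ i by omega) hin; omega
  have hAK : (A k K : ℂ) ≠ 0 := Complex.ofReal_ne_zero.mpr (hA.apply_pos hc hlo hhi hK).ne'
  have hrow : (fun j => C (A k K : ℂ) * φ j K) =
      fun j => X * φ j k - ∑ l ∈ Finset.univ.erase K, C (A k l : ℂ) * φ j l := by
    funext j
    rw [← hφ_rec j k hregular, ← Finset.add_sum_erase _ _ (Finset.mem_univ K),
      add_sub_cancel_right]
  rw [← vheight_C_mul hAK, hrow]
  refine vheight_X_mul_sub_sum _ _ _ hk fun l hl hAl => hlt l ?_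
  refine lt_of_le_of_ne (not_lt.mp fun hKl => hAl ?_) (Finset.ne_of_mem_erase hl)
  exact_mod_cast hA.apply_eq_zero hc.le hlo.le (by omega)

theorem vheight_phi_eq_indexHeight (hn : 0 < n) (hnN : n < N) (hA : MatrixClassM n N A m)
    {T : Matrix (Fin n) (Fin n) ℝ}
    (hT_upper : ∀ i j : Fin n, j < i → T i j = 0) (hT_diag : ∀ j : Fin n, T j j ≠ 0)
    (hφ_init : ∀ (j : Fin n) (i : Fin n), φ j (Fin.castLE (le_of_lt hnN) i) = C ((T j i : ℂ)))
    (hφ_rec : ∀ (j : Fin n) (k : Fin N), (∀ i, 1 ≤ i → i ≤ n → m i ≠ (k : ℕ) + 1) →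
      ∑ l, C ((A k l : ℂ)) * φ j l = X * φ j k)
    (K : Fin N) : vheight n (fun j => φ j K) = indexHeight n m (K + 1) := by
  induction K using WellFoundedLT.induction with
  | _ K ih =>
    rcases lt_or_ge (K : ℕ) n with hKn | hnK
    · rw [indexHeight_of_le hKn]
      simpa using vheight_phi_castLE hnN hT_upper hT_diag hφ_init ⟨K, hKn⟩
    obtain ⟨c, hc, k, hlo, hhi, hK⟩ := exists_add_sub_eq (n := n) hA.m_zero (i := (K : ℕ) + 1)
      (by omega) (by rw [hA.m_last]; exact K.isLt)
    have hkN := apply_add_sub_le hA.m_mono hc le_rfl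
    have hstep : indexHeight n m (K + 1) = indexHeight n m k + n := by
      rw [hK, indexHeight_add_sub hn hA.m_mono hc hlo hhi]
    let k₀ : Fin N := ⟨k - 1, by omega⟩
    have hk : (k₀ : ℕ) + 1 = k := by simp only [k₀]; omega
    rw [hstep]
    refine vheight_phi_of_row hA hφ_rec hc (k := k₀) (by omega) (by omega) (by omega)
      ((ih k₀ (Fin.mk_lt_mk.mpr (by omega))).trans (by rw [hk])) fun l hl => ?_
    rw [ih l hl, ← hstep, Nat.cast_lt]
    exact indexHeight_strictMonoOn hn (Set.mem_Ici.mpr (by omega)) (Set.mem_Ici.mpr (by omega))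
      (by omega)

theorem vheight_Q_eq_indexHeight_add (hn : 0 < n) (hA : MatrixClassM n N A m)
    (hp : ∀ k : Fin N, vheight n (fun j => φ j k) = indexHeight n m (k + 1))
    {Q : Fin n → Fin n → ℂ[X]}
    (hQ : ∀ (j i : Fin n) (k : Fin N), (k : ℕ) + 1 = m ((i : ℕ) + 1) →
      Q j i = X * φ j k - ∑ l, C ((A k l : ℂ)) * φ j l)
    (t : Fin n) : vheight n (fun j => Q j t) = (indexHeight n m (m (t + 1)) + n : ℕ) := by
  have htn : (t : ℕ) + 1 ≤ n := t.isLt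
  have hmt : (t : ℕ) + 1 ≤ m (t + 1) := by
    simpa [hA.m_zero] using apply_add_sub_le hA.m_mono (Nat.zero_le _) htn
  have hmtN : m (t + 1) + (n - (t + 1)) ≤ N := hA.m_last ▸ apply_add_sub_le hA.m_mono htn le_rfl
  let k : Fin N := ⟨m (t + 1) - 1, by omega⟩
  have hk : (k : ℕ) + 1 = m (t + 1) := by simp only [k]; omega
  simp only [hQ _ t k hk]
  rw [← hk]
  refine vheight_X_mul_sub_sum _ _ _ (hp k) fun l _ hAl => ?_
  have hl : (l : ℕ) + 1 + (t + 1) ≤ m (t + 1) + n := by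
    by_contra hl
    exact hAl (by exact_mod_cast hA.apply_eq_zero htn hk.ge (by omega))
  rw [hp l, hk, Nat.cast_lt]
  exact indexHeight_lt_add hn hA.m_mono (by omega) htn (by omega) hl

end vheight_phi

/-- Every nonnegative integer is the height of some p_k or of some z^l·q_j. -/
theorem stmt12
    (n N : ℕ) (hn : 0 < n) (hnN : n < N)
    (A : Matrix (Fin N) (Fin N) ℝ) (m : ℕ → ℕ)
    (hA : MatrixClassM n N A m)
    (T : Matrix (Fin n) (Fin n) ℝ)
    (hT_upper : ∀ i j : Fin n, j < i → T i j = 0)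
    (hT_diag : ∀ j : Fin n, T j j ≠ 0)
    (φ : Fin n → Fin N → Polynomial ℂ)
    (hφ_init : ∀ (j : Fin n) (i : Fin n),
      φ j (Fin.castLE (le_of_lt hnN) i) = C ((T j i : ℂ)))
    (hφ_rec : ∀ (j : Fin n) (k : Fin N),
      (∀ i, 1 ≤ i → i ≤ n → m i ≠ (k : ℕ) + 1) →
      ∑ l, C ((A k l : ℂ)) * φ j l = X * φ j k)
    (Q : Fin n → Fin n → Polynomial ℂ)
    (hQ : ∀ (j i : Fin n) (k : Fin N), (k : ℕ) + 1 = m ((i : ℕ) + 1) →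
      Q j i = X * φ j k - ∑ l, C ((A k l : ℂ)) * φ j l)
    :
    ∀ s : ℕ,
      (∃ k : Fin N, vheight n (fun jj => φ jj k) = (s : WithBot ℕ)) ∨
      (∃ (j : Fin n) (l : ℕ),
        (s : WithBot ℕ) = vheight n (fun jj => Q jj j) + ((n * l : ℕ) : WithBot ℕ)) := by
  have hp := vheight_phi_eq_indexHeight hn hnN hA hT_upper hT_diag hφ_init hφ_rec
  intro s
  rcases indexHeight_cover hn hA.m_zero hA.m_last hA.m_mono hA.m_le s with
    ⟨i, hi, hiN, rfl⟩ | ⟨t, l, ht, htn, rfl⟩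
  · refine Or.inl ⟨⟨i - 1, by omega⟩, ?_⟩
    rw [hp, Nat.sub_add_cancel hi]
  · refine Or.inr ⟨⟨t - 1, by omega⟩, l, ?_⟩
    rw [vheight_Q_eq_indexHeight_add hn hA hp hQ, ← Nat.cast_add, Nat.sub_add_cancel ht]
end
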